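/- Let β > −1 with β ≠ 0 and ϵ ∈ ℝ. The Poincaré flow u_P satisfies: (i) div u_P = 0 at every point of ℝ³; (ii) u_P(x)·∇φ(x) = 0 for every x ∈ ℝ³ (in particular u_P is tangent to the boundary of the spheroid Ω_β); (iii) there exists a differentiable function p : ℝ³ → ℝ such that (u_P·∇)u_P(x) + 2ϵ e_x × u_P(x) + ∇p(x) = 0 for every x ∈ ℝ³. Since moreover div ε(u_P) = 0 everywhere, u_P is a steady solution of the precessing Navier–Stokes equations in Ω_β with slip boundary condition, for every viscosity. -/

import Mathlib

open MeasureTheory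

noncomputable section

abbrev E3 : Type := Fin 3 → ℝ

/-- standard basis vector -/
def sb (i : Fin 3) : E3 := Pi.single i 1

/-- Euclidean dot product -/
def dot3 (a b : E3) : ℝ := ∑ i, a i * b i

/-- cross product -/
def cross3 (a b : E3) : E3 :=
  ![a 1 * b 2 - a 2 * b 1, a 2 * b 0 - a 0 * b 2, a 0 * b 1 - a 1 * b 0]

/-- Jacobian matrix of a vector field: entry (i,j) is ∂ⱼ uᵢ -/
def jac (u : E3 → E3) (x : E3) : Matrix (Fin 3) (Fin 3) ℝ :=
  fun i j => fderiv ℝ u x (sb j) i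

/-- strain rate tensor ε(u) = ½(Du + Duᵀ) -/
def strain (u : E3 → E3) (x : E3) : Matrix (Fin 3) (Fin 3) ℝ :=
  fun i j => (jac u x i j + jac u x j i) / 2

/-- divergence (trace of Jacobian) -/
def div3 (u : E3 → E3) (x : E3) : ℝ := ∑ i, jac u x i i

/-- divergence of the strain tensor: j-th component Σᵢ ∂ᵢ ε(u)ᵢⱼ -/
def divStrain (u : E3 → E3) (x : E3) : E3 :=
  fun j => ∑ i, fderiv ℝ (fun y => strain u y i j) x (sb i)

/-- convective term (a·∇)b = Db (a) -/
def conv (a b : E3 → E3) (x : E3) : E3 := fderiv ℝ b x (a x)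

/-- gradient of a scalar field -/
def grad3 (p : E3 → ℝ) (x : E3) : E3 := fun i => fderiv ℝ p x (sb i)

/-- Poincaré flow -/
def uP (β ε : ℝ) (x : E3) : E3 :=
  ![-(x 1), x 0 - (2 * ε / β) * (1 + β) * x 2, (2 * ε / β) * x 1]

/-- level function of the spheroid -/
def phi (β : ℝ) (x : E3) : ℝ := (x 0) ^ 2 + (x 1) ^ 2 + (1 + β) * (x 2) ^ 2 - 1

/-- gradient of φ -/
def gradPhi (β : ℝ) (x : E3) : E3 := ![2 * x 0, 2 * x 1, 2 * (1 + β) * x 2]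

/-- the spheroid Ω_β -/
def Omega (β : ℝ) : Set E3 := {x | phi β x < 0}

/-- componentwise Laplacian -/
def lap3 (u : E3 → E3) (x : E3) : E3 :=
  fun j => ∑ i, fderiv ℝ (fun y => jac u y j i) x (sb i)

/-! The Poincaré flow is linear, `u_P x = A x` with a traceless matrix `A`, so its Jacobian is the
constant `A`: the divergence is `tr A = 0` and the strain tensor is constant, hence divergence
free. The convective and Coriolis terms together are again linear, `x ↦ M x` with
`M = A² + 2ϵ [e_x]_× A`, and a linear field is a gradient exactly when its matrix is symmetric; for
this `M` symmetry reduces to `(2ϵ/β)(1 + β) = 2ϵ/β + 2ϵ`. The pressure is then `p x = -½ xᵀ M x`. -/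

open Matrix

section LinearField
variable {n : Type*} [Fintype n]

theorem Matrix.hasFDerivAt_mulVec {m : Type*} (A : Matrix m n ℝ) (x : n → ℝ) :
    HasFDerivAt (A *ᵥ ·) (LinearMap.toContinuousLinearMap (Matrix.mulVecLin A)) x :=
  (LinearMap.toContinuousLinearMap (Matrix.mulVecLin A)).hasFDerivAt

theorem Matrix.fderiv_dotProduct_mulVec_apply (A : Matrix n n ℝ) (x h : n → ℝ) :
    fderiv ℝ (fun y => y ⬝ᵥ (A *ᵥ y)) x h = ((A + Aᵀ) *ᵥ x) ⬝ᵥ h := by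
  let B : (n → ℝ) →L[ℝ] (n → ℝ) →L[ℝ] ℝ :=
    (dotProductBilin ℝ ℝ : (n → ℝ) →ₗ[ℝ] (n → ℝ) →ₗ[ℝ] ℝ).toContinuousBilinearMap
  have hB := B.hasFDerivAt_of_bilinear (hasFDerivAt_id x) (A.hasFDerivAt_mulVec x)
  rw [show (fun y => y ⬝ᵥ (A *ᵥ y)) = fun y => B (id y) (A *ᵥ y) from rfl, hB.fderiv]
  simp [B, add_mulVec, mulVec_transpose, dotProduct_mulVec, add_dotProduct, dotProduct_comm h,
    add_comm]

end LinearField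

section LinearVectorField
variable (A : Matrix (Fin 3) (Fin 3) ℝ)

theorem jac_mulVec (x : E3) : jac (A *ᵥ ·) x = A := by
  ext i j
  simp [jac, (A.hasFDerivAt_mulVec x).fderiv, sb]

theorem div3_mulVec (x : E3) : div3 (A *ᵥ ·) x = A.trace := by
  simp [div3, jac_mulVec, Matrix.trace]

theorem divStrain_mulVec (x : E3) : divStrain (A *ᵥ ·) x = 0 := by
  ext j
  simp [divStrain, strain, jac_mulVec]

theorem conv_mulVec (a : E3 → E3) (x : E3) : conv a (A *ᵥ ·) x = A *ᵥ a x := by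
  simp [conv, (A.hasFDerivAt_mulVec _).fderiv]

theorem differentiable_dotProduct_mulVec : Differentiable ℝ (fun y : E3 => y ⬝ᵥ (A *ᵥ y)) := by
  simp only [dotProduct, mulVec]
  fun_prop

theorem grad3_dotProduct_mulVec (x : E3) :
    grad3 (fun y => y ⬝ᵥ (A *ᵥ y)) x = (A + Aᵀ) *ᵥ x := by
  ext i
  simp [grad3, A.fderiv_dotProduct_mulVec_apply, sb]

end LinearVectorField

def crossMatrix (a : E3) : Matrix (Fin 3) (Fin 3) ℝ :=
  !![0, -a 2, a 1; a 2, 0, -a 0; -a 1, a 0, 0]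

theorem cross3_eq_crossMatrix_mulVec (a v : E3) : cross3 a v = crossMatrix a *ᵥ v := by
  ext i
  fin_cases i <;> simp [cross3, crossMatrix, mulVec, dotProduct, Fin.sum_univ_three] <;> ring

def poincareMatrix (β ε : ℝ) : Matrix (Fin 3) (Fin 3) ℝ :=
  !![0, -1, 0; 1, 0, -(2 * ε / β) * (1 + β); 0, 2 * ε / β, 0]

theorem uP_eq_mulVec (β ε : ℝ) : uP β ε = (poincareMatrix β ε *ᵥ ·) := by
  ext x i
  fin_cases i <;> simp [uP, poincareMatrix, mulVec, dotProduct, Fin.sum_univ_three]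
  ring

theorem trace_poincareMatrix (β ε : ℝ) : (poincareMatrix β ε).trace = 0 := by
  simp [poincareMatrix, Matrix.trace, Fin.sum_univ_three]

theorem dot3_uP_gradPhi (β ε : ℝ) (x : E3) : dot3 (uP β ε x) (gradPhi β x) = 0 := by
  simp [dot3, uP, gradPhi, Fin.sum_univ_three]
  ring

def poincareMomentumMatrix (β ε : ℝ) : Matrix (Fin 3) (Fin 3) ℝ :=
  poincareMatrix β ε * poincareMatrix β ε + (2 * ε) • (crossMatrix (sb 0) * poincareMatrix β ε)

theorem transpose_poincareMomentumMatrix {β : ℝ} (ε : ℝ) (hβ : β ≠ 0) :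
    (poincareMomentumMatrix β ε)ᵀ = poincareMomentumMatrix β ε := by
  ext i j
  fin_cases i <;> fin_cases j <;>
    simp [poincareMomentumMatrix, poincareMatrix, crossMatrix, sb] <;> field_simp

theorem conv_uP_add_coriolis (β ε : ℝ) (x : E3) :
    conv (uP β ε) (uP β ε) x + (2 * ε) • cross3 (sb 0) (uP β ε x) =
      poincareMomentumMatrix β ε *ᵥ x := by
  rw [uP_eq_mulVec, conv_mulVec, cross3_eq_crossMatrix_mulVec, poincareMomentumMatrix,
    add_mulVec, mulVec_mulVec, smul_mulVec, mulVec_mulVec]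

theorem stmt_1_general (β ε : ℝ) (hβ0 : β ≠ 0) :
    (∀ x : E3, div3 (uP β ε) x = 0) ∧
    (∀ x : E3, dot3 (uP β ε x) (gradPhi β x) = 0) ∧
    (∃ p : E3 → ℝ, Differentiable ℝ p ∧
      ∀ x : E3, conv (uP β ε) (uP β ε) x + (2 * ε) • cross3 (sb 0) (uP β ε x)
        + grad3 p x = 0) ∧
    (∀ x : E3, divStrain (uP β ε) x = 0) := by
  set M := poincareMomentumMatrix β ε
  refine ⟨fun x => ?_, dot3_uP_gradPhi β ε,
    ⟨fun y => y ⬝ᵥ ((-(1 / 2 : ℝ) • M) *ᵥ y), differentiable_dotProduct_mulVec _, fun x => ?_⟩,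
    fun x => ?_⟩
  · rw [uP_eq_mulVec, div3_mulVec, trace_poincareMatrix]
  · have hgrad : (-(1 / 2 : ℝ) • M) + (-(1 / 2 : ℝ) • M)ᵀ = -M := by
      rw [transpose_smul, transpose_poincareMomentumMatrix ε hβ0]
      module
    rw [conv_uP_add_coriolis, grad3_dotProduct_mulVec, hgrad, neg_mulVec, add_neg_cancel]
  · rw [uP_eq_mulVec, divStrain_mulVec]

/-- the Poincaré flow is divergence free, tangent to the boundary of the
spheroid Ω_β, solves the steady precessing Euler/Navier–Stokes momentum balance for some
pressure p, and has div ε(u_P) = 0 everywhere; hence it is a steady solution with slip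
boundary condition for every viscosity. -/
theorem stmt_1 (β ε : ℝ) (hβ : -1 < β) (hβ0 : β ≠ 0) :
    (∀ x : E3, div3 (uP β ε) x = 0) ∧
    (∀ x : E3, dot3 (uP β ε x) (gradPhi β x) = 0) ∧
    (∃ p : E3 → ℝ, Differentiable ℝ p ∧
      ∀ x : E3, conv (uP β ε) (uP β ε) x + (2 * ε) • cross3 (sb 0) (uP β ε x)
        + grad3 p x = 0) ∧
    (∀ x : E3, divStrain (uP β ε) x = 0) :=
  stmt_1_general β ε hβ0
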